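/- arXiv:2205.05500 — 2 statements merged into one kernel-verified Lean document; each statement's English description precedes it below -/
import Mathlib

section
/- Suppose 2^m ≤ 2^{L}·(m·R/w)^w for some real R ≥ 16 and natural numbers m ≥ w ≥ L ≥ 0 with w ≥ 1. Then m ≤ L + w·log₂(2·R·log₂(R)). -/
/-!
Put `x = m / w` and `t = log₂ R ≥ 4`. Taking `log₂` of the hypothesis gives
`m ≤ L + w (log₂ x + t)`, and since `L ≤ w` this forces `x ≤ 1 + log₂ x + t`.
As `x - log₂ x` grows past `x = 2t` (compare `log₂` with its tangent line there),
that inequality implies `x ≤ 2t`, i.e. `log₂ x ≤ log₂ (2t)`, which is the claim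
because `log₂ (2 R t) = t + log₂ (2t)`.
-/

open Real

lemma Real.logb_le_logb_add_div {b a x : ℝ} (hb : 1 < b) (ha : 0 < a) (hx : 0 < x) :
    logb b x ≤ logb b a + (x - a) / (a * log b) := by
  have hlogb : 0 < log b := log_pos hb
  have hlog : log x - log a ≤ (x - a) / a := by
    have := log_le_sub_one_of_pos (div_pos hx ha)
    rw [log_div hx.ne' ha.ne'] at this
    rwa [sub_div, div_self ha.ne']
  calc logb b x = logb b a + (log x - log a) / log b := by
        rw [logb, logb]; ring
    _ ≤ logb b a + (x - a) / a / log b := by gcongr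
    _ = logb b a + (x - a) / (a * log b) := by rw [div_div]

lemma Real.one_lt_mul_log_two {a : ℝ} (ha : 2 ≤ a) : 1 < a * log 2 := by
  nlinarith [log_two_gt_d9]

lemma Real.logb_two_le_sub_two {t : ℝ} (ht : 4 ≤ t) : logb 2 t ≤ t - 2 := by
  have hlogb4 : logb 2 4 = 2 := by
    rw [show (4 : ℝ) = 2 ^ 2 by norm_num, logb_pow, logb_self_eq_one one_lt_two]
    norm_num
  have hslope : (t - 4) / (4 * log 2) ≤ t - 4 :=
    div_le_self (by linarith) (one_lt_mul_log_two (by norm_num)).le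
  linarith [logb_le_logb_add_div one_lt_two (by norm_num : (0 : ℝ) < 4) (by linarith : 0 < t)]

lemma le_two_mul_of_le_one_add_logb_add {x t : ℝ} (ht : 4 ≤ t) (hx : 0 < x)
    (h : x ≤ 1 + logb 2 x + t) : x ≤ 2 * t := by
  by_contra! hlt
  have ht0 : 0 < t := by linarith
  have hlogb2t : logb 2 (2 * t) = 1 + logb 2 t := by
    rw [logb_mul two_ne_zero ht0.ne', logb_self_eq_one one_lt_two]
  have htangent := logb_le_logb_add_div one_lt_two (by linarith : 0 < 2 * t) hx
  have hslope : (x - 2 * t) / (2 * t * log 2) < x - 2 * t :=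
    div_lt_self (by linarith) (one_lt_mul_log_two (by linarith))
  linarith [logb_two_le_sub_two ht]

lemma le_add_mul_logb_of_two_pow_le {m L w : ℕ} {y : ℝ} (hy : 0 < y)
    (h : (2 : ℝ) ^ m ≤ 2 ^ L * y ^ w) : (m : ℝ) ≤ L + w * logb 2 y := by
  have := logb_le_logb_of_le one_lt_two (by positivity) h
  rwa [logb_mul (by positivity) (by positivity), logb_pow, logb_pow, logb_pow,
    logb_self_eq_one one_lt_two, mul_one, mul_one] at this

/-- If `2^m ≤ 2^L · (m·R/w)^w` for some real `R ≥ 16` and natural numbers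
`m ≥ w ≥ L ≥ 0` with `w ≥ 1`, then `m ≤ L + w·log₂(2·R·log₂ R)`. -/
theorem vc_bound_lemma (R : ℝ) (hR : 16 ≤ R) (m w L : ℕ)
    (hmw : w ≤ m) (hwL : L ≤ w) (hw : 1 ≤ w)
    (h : (2 : ℝ) ^ m ≤ 2 ^ L * ((m : ℝ) * R / (w : ℝ)) ^ w) :
    (m : ℝ) ≤ (L : ℝ) + (w : ℝ) * Real.logb 2 (2 * R * Real.logb 2 R) := by
  set t := logb 2 R
  have ht : 4 ≤ t := by
    calc (4 : ℝ) = logb 2 16 := by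
          rw [show (16 : ℝ) = 2 ^ 4 by norm_num, logb_pow, logb_self_eq_one one_lt_two]
          norm_num
      _ ≤ t := logb_le_logb_of_le one_lt_two (by norm_num) hR
  have hw0 : (0 : ℝ) < w := by exact_mod_cast hw
  have hm0 : (0 : ℝ) < m := by exact_mod_cast hw.trans hmw
  set x := (m : ℝ) / w
  have hx : 0 < x := by positivity
  have hlog : (m : ℝ) ≤ L + w * (logb 2 x + t) := by
    rw [← logb_mul hx.ne' (by positivity : (0 : ℝ) < R).ne']
    exact le_add_mul_logb_of_two_pow_le (by positivity) (by rwa [mul_div_right_comm] at h)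
  have hmx : (m : ℝ) = w * x := (mul_div_cancel₀ _ hw0.ne').symm
  have hLw : (L : ℝ) ≤ w := by exact_mod_cast hwL
  have hx2t : x ≤ 2 * t := by
    refine le_two_mul_of_le_one_add_logb_add ht hx (le_of_mul_le_mul_left ?_ hw0)
    linarith
  have hlogx : logb 2 x ≤ logb 2 (2 * t) := logb_le_logb_of_le one_lt_two hx hx2t
  calc (m : ℝ) ≤ L + w * (logb 2 x + t) := hlog
    _ ≤ L + w * (logb 2 (2 * t) + t) := by gcongr
    _ = L + w * logb 2 (2 * R * t) := by
      rw [show 2 * R * t = 2 * t * R by ring, logb_mul (x := 2 * t) (by positivity) (by positivity)]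
end

section
/- The function from ℝ^t to ℝ computing the coordinate-wise maximum (x₁,...,x_t) ↦ max{x₁,...,x_t} can be exactly represented by a ReLU feedforward neural network with ⌈log₂ t⌉ hidden layers and 3·t neurons per hidden layer. -/
/-- ReLU activation function `σ(x) = max{x,0}`. -/
noncomputable def relu (x : ℝ) : ℝ := max x 0

/-- Outputs of the hidden layers of a fully connected ReLU feedforward network
with input dimension `t` and `r` neurons per hidden layer: `hiddenLayer t r w b x l i`
is the output of neuron `i` of hidden layer `l+1` (layers counted from `1`). -/
noncomputable def hiddenLayer (t r : ℕ) (w : ℕ → ℕ → ℕ → ℝ) (b : ℕ → ℕ → ℝ)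
    (x : ℕ → ℝ) : ℕ → ℕ → ℝ
  | 0, i => relu ((∑ j ∈ Finset.range t, w 0 i j * x j) + b 0 i)
  | (l + 1), i =>
      relu ((∑ j ∈ Finset.range r, w (l + 1) i j * hiddenLayer t r w b x l j) + b (l + 1) i)

/-- Output of a fully connected ReLU feedforward network with `L` hidden layers,
`r` neurons per hidden layer, input dimension `t`, inner weights `w`, biases `b`,
output weights `wout` and output bias `w0`. -/
noncomputable def fnn (t r L : ℕ) (w : ℕ → ℕ → ℕ → ℝ) (b : ℕ → ℕ → ℝ)
    (wout : ℕ → ℝ) (w0 : ℝ) (x : ℕ → ℝ) : ℝ :=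
  match L with
  | 0 => (∑ i ∈ Finset.range t, wout i * x i) + w0
  | (l + 1) => (∑ i ∈ Finset.range r, wout i * hiddenLayer t r w b x l i) + w0

/-!
Run a knockout tournament on the coordinates: after `l` rounds, entry `k` holds the maximum of
`x` over the window `[k, k + 2^l) ∩ [0, t)`, obtained from round `l - 1` by comparing `k` with its
partner `k + 2^(l-1)`. Since `max a b = σ(a - b) + σ(b) - σ(-b)`, one round costs one hidden layer
of three neurons per entry, and the next layer only needs linear combinations of these maxima.
After `⌈log₂ t⌉` rounds the window of entry `0` is all of `[0, t)`.
-/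

open Finset

namespace ReLUMax

lemma sum_range_mul_eq_sum_sum {M : Type*} [AddCommMonoid M] (m n : ℕ) (f : ℕ → M) :
    ∑ j ∈ range (m * n), f j = ∑ u ∈ range n, ∑ s ∈ range m, f (m * u + s) := by
  induction n with
  | zero => simp
  | succ n ih => rw [Nat.mul_succ, sum_range_add, ih, sum_range_succ]

lemma isGreatest_image_sup' {ι α : Type*} [LinearOrder α] {s : Finset ι} (hs : s.Nonempty)
    (f : ι → α) : IsGreatest (f '' s) (s.sup' hs f) := by
  obtain ⟨i, hi, hmax⟩ := s.exists_mem_eq_sup' hs f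
  exact ⟨⟨i, hi, hmax.symm⟩, by rintro _ ⟨j, hj, rfl⟩; exact s.le_sup' f hj⟩

/-- An entry without opponent is compared with itself, so that every round is a plain `max`. -/
def partner (t l k : ℕ) : ℕ := if k + 2 ^ l < t then k + 2 ^ l else k

lemma partner_lt {t k : ℕ} (l : ℕ) (hk : k < t) : partner t l k < t := by
  unfold partner; split_ifs <;> omega

noncomputable def tournament (t : ℕ) (x : ℕ → ℝ) : ℕ → ℕ → ℝ
  | 0, k => x k
  | l + 1, k => max (tournament t x l k) (tournament t x l (partner t l k))

lemma isGreatest_tournament (t : ℕ) (x : ℕ → ℝ) (l : ℕ) {k : ℕ} (hk : k < t) :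
    IsGreatest (x '' Set.Ico k (min (k + 2 ^ l) t)) (tournament t x l k) := by
  induction l generalizing k with
  | zero =>
    rw [pow_zero, min_eq_left (by omega), Set.Ico_add_one_right_eq_Icc, Set.Icc_self,
      Set.image_singleton]
    exact isGreatest_singleton
  | succ l ih =>
    by_cases hmatch : k + 2 ^ l < t
    · have hsplit : Set.Ico k (min (k + 2 ^ (l + 1)) t)
          = Set.Ico k (min (k + 2 ^ l) t) ∪ Set.Ico (k + 2 ^ l) (min (k + 2 ^ l + 2 ^ l) t) := by
        rw [min_eq_left hmatch.le, Set.Ico_union_Ico_eq_Ico (Nat.le_add_right _ _)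
          (le_min (Nat.le_add_right _ _) hmatch.le), pow_succ, mul_two, add_assoc]
      rw [hsplit, Set.image_union, tournament, partner, if_pos hmatch]
      exact (ih hk).union (ih hmatch)
    · have hwindow : min (k + 2 ^ (l + 1)) t = min (k + 2 ^ l) t := by
        rw [pow_succ]; omega
      rw [hwindow, tournament, partner, if_neg hmatch, max_self]
      exact ih hk

lemma relu_sub_add_relu_sub_relu_neg (a b : ℝ) : relu (a - b) + relu b - relu (-b) = max a b := by
  rw [relu, relu, relu, add_sub_assoc, max_zero_sub_max_neg_zero_eq_self, ← max_add_add_right,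
    sub_add_cancel, zero_add]

def maxGadget (a b : ℝ) : ℕ → ℝ
  | 0 => a - b
  | 1 => b
  | _ => -b

def gadgetSign (s : ℕ) : ℝ := if s = 2 then -1 else 1

lemma sum_gadgetSign_mul_relu_maxGadget (a b : ℝ) :
    ∑ s ∈ range 3, gadgetSign s * relu (maxGadget a b s) = max a b := by
  rw [← relu_sub_add_relu_sub_relu_neg]
  simp [sum_range_succ, gadgetSign, maxGadget, sub_eq_add_neg]

def gadgetCoeff (k p : ℕ) : ℕ → ℕ → ℝ
  | 0, u => (if u = k then 1 else 0) - (if u = p then 1 else 0)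
  | 1, u => if u = p then 1 else 0
  | _, u => -(if u = p then 1 else 0)

lemma sum_gadgetCoeff_mul {n k p : ℕ} (hk : k < n) (hp : p < n) (r : ℕ) (V : ℕ → ℝ) :
    ∑ u ∈ range n, gadgetCoeff k p r u * V u = maxGadget (V k) (V p) r := by
  match r with
  | 0 => simp [gadgetCoeff, maxGadget, sub_mul, sum_sub_distrib, hk, hp]
  | 1 => simp [gadgetCoeff, maxGadget, hp]
  | r + 2 => simp [gadgetCoeff, maxGadget, hp]

/-- Neuron `3 k + r` of layer `l` carries coordinate `r` of the gadget comparing `k` with its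
partner. -/
def neuronCoeff (t l i : ℕ) : ℕ → ℝ :=
  gadgetCoeff (i / 3) (partner t l (i / 3)) (i % 3)

lemma neuronCoeff_three_mul_add (t l : ℕ) {k r : ℕ} (hr : r < 3) :
    neuronCoeff t l (3 * k + r) = gadgetCoeff k (partner t l k) r := by
  rw [neuronCoeff, show (3 * k + r) / 3 = k by omega, show (3 * k + r) % 3 = r by omega]

/-- Layer `l + 1` reads the maxima of round `l + 1` off layer `l` through `gadgetSign`. -/
def tournamentWeight (t : ℕ) : ℕ → ℕ → ℕ → ℝ
  | 0, i, j => neuronCoeff t 0 i j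
  | l + 1, i, j => neuronCoeff t (l + 1) i (j / 3) * gadgetSign (j % 3)

def outputWeight (i : ℕ) : ℝ := if i < 3 then gadgetSign i else 0

lemma sum_tournamentWeight_succ_mul {t : ℕ} (l i : ℕ) {h V : ℕ → ℝ}
    (hV : ∀ u < t, ∑ s ∈ range 3, gadgetSign s * h (3 * u + s) = V u) :
    ∑ j ∈ range (3 * t), tournamentWeight t (l + 1) i j * h j
      = ∑ u ∈ range t, neuronCoeff t (l + 1) i u * V u := by
  rw [sum_range_mul_eq_sum_sum]
  refine sum_congr rfl fun u hu => ?_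
  rw [← hV u (mem_range.1 hu), mul_sum]
  refine sum_congr rfl fun s hs => ?_
  have hs : s < 3 := mem_range.1 hs
  rw [tournamentWeight, show (3 * u + s) / 3 = u by omega, show (3 * u + s) % 3 = s by omega]
  ring

variable {t : ℕ} (x : ℕ → ℝ)

lemma hiddenLayer_tournamentWeight (l : ℕ) {k r : ℕ} (hk : k < t) (hr : r < 3) :
    hiddenLayer t (3 * t) (tournamentWeight t) 0 x l (3 * k + r)
      = relu (maxGadget (tournament t x l k) (tournament t x l (partner t l k)) r) := by
  induction l generalizing k r with
  | zero =>
    simp only [hiddenLayer, tournamentWeight, neuronCoeff_three_mul_add t 0 hr, Pi.zero_apply,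
      add_zero]
    exact congrArg relu (sum_gadgetCoeff_mul hk (partner_lt 0 hk) r x)
  | succ l ih =>
    have hround : ∀ u < t, ∑ s ∈ range 3, gadgetSign s *
        hiddenLayer t (3 * t) (tournamentWeight t) 0 x l (3 * u + s) = tournament t x (l + 1) u := by
      intro u hu
      rw [tournament, ← sum_gadgetSign_mul_relu_maxGadget]
      exact sum_congr rfl fun s hs => by rw [ih hu (mem_range.1 hs)]
    simp only [hiddenLayer, Pi.zero_apply, add_zero]
    rw [sum_tournamentWeight_succ_mul l _ hround, neuronCoeff_three_mul_add _ _ hr,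
      sum_gadgetCoeff_mul hk (partner_lt _ hk)]

lemma fnn_tournamentWeight (ht : 0 < t) {L : ℕ} (hL : t ≤ 2 ^ L) :
    fnn t (3 * t) L (tournamentWeight t) 0 outputWeight 0 x = tournament t x L 0 := by
  cases L with
  | zero =>
    obtain rfl : t = 1 := by simp at hL; omega
    simp [fnn, tournament, outputWeight, gadgetSign]
  | succ L =>
    have hout : ∀ i ∈ range (3 * t), i ∉ range 3 →
        outputWeight i * hiddenLayer t (3 * t) (tournamentWeight t) 0 x L i = 0 := by
      intro i _ hi
      rw [outputWeight, if_neg (by simpa using hi), zero_mul]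
    rw [fnn, add_zero, ← sum_subset (range_subset_range.2 (by omega)) hout, tournament,
      ← sum_gadgetSign_mul_relu_maxGadget]
    refine sum_congr rfl fun s hs => ?_
    have hs : s < 3 := mem_range.1 hs
    rw [outputWeight, if_pos hs, ← hiddenLayer_tournamentWeight x L ht hs, mul_zero, zero_add]

end ReLUMax

open ReLUMax

/-- The coordinate-wise maximum `(x₁,…,x_t) ↦ max{x₁,…,x_t}` can be exactly
represented by a ReLU feedforward neural network with `⌈log₂ t⌉` hidden layers
and `3·t` neurons per hidden layer. -/
theorem max_representable_by_fnn (t : ℕ) (ht : 1 ≤ t) :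
    ∃ (w : ℕ → ℕ → ℕ → ℝ) (b : ℕ → ℕ → ℝ) (wout : ℕ → ℝ) (w0 : ℝ),
      ∀ x : ℕ → ℝ,
        fnn t (3 * t) (Nat.clog 2 t) w b wout w0 x
          = (Finset.range t).sup' (Finset.nonempty_range_iff.mpr (by omega)) x := by
  refine ⟨tournamentWeight t, 0, outputWeight, 0, fun x => ?_⟩
  have hdepth : t ≤ 2 ^ Nat.clog 2 t := Nat.le_pow_clog one_lt_two t
  have hwindow : Set.Ico 0 (min (0 + 2 ^ Nat.clog 2 t) t) = ↑(range t) := by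
    rw [zero_add, min_eq_right hdepth, coe_range]
    ext; simp
  rw [fnn_tournamentWeight x ht hdepth]
  have hmax := isGreatest_tournament t x (Nat.clog 2 t) ht
  rw [hwindow] at hmax
  exact hmax.unique (isGreatest_image_sup' _ x)
end
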